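/- For every positive integer n, Kinkelin's G-function satisfies G̃(n+1) = 1^1 · 2^2 · ⋯ · n^n = ∏_{k=1}^n k^k. -/

import Mathlib

/-!
The recurrence `Γ(t + 1) = t Γ(t)` shows `∫ₓ^{x+1} log Γ = ∫₀¹ log Γ + ∫₀ˣ log = ∫₀¹ log Γ + x log x - x`,
and Legendre's duplication formula evaluates Raabe's integral `∫₀¹ log Γ = log(2π) / 2`.
Together they give the functional equation `G̃(x + 1) = x ^ x · G̃(x)` for `x ≥ 0`,
which iterated from `G̃(0) = 1` yields the hyperfactorial at the integers.
-/

open Real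

/-- Kinkelin's G-function:
`G̃(x) = exp(∫₀^x log Γ(t) dt + x(x-1)/2 - (x/2) log(2π))`. -/
noncomputable def kinkelinG (x : ℝ) : ℝ :=
  Real.exp ((∫ t in (0:ℝ)..x, Real.log (Real.Gamma t)) + x * (x - 1) / 2 -
    x / 2 * Real.log (2 * π))

open Set Finset MeasureTheory intervalIntegral

namespace Real

theorem log_Gamma_add_one {t : ℝ} (ht : 0 < t) :
    log (Gamma (t + 1)) = log t + log (Gamma t) := by
  rw [Gamma_add_one ht.ne', log_mul ht.ne' (Gamma_pos_of_pos ht).ne']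

theorem log_Gamma_add_log_Gamma_add_half {s : ℝ} (hs : 0 < s) :
    log (Gamma s) + log (Gamma (s + 1 / 2)) =
      log (Gamma (2 * s)) + ((1 - 2 * s) * log 2 + log π / 2) := by
  have h2s : 0 < Gamma (2 * s) := Gamma_pos_of_pos (by positivity)
  rw [← log_mul (Gamma_pos_of_pos hs).ne' (Gamma_pos_of_pos (by positivity)).ne',
    Gamma_mul_Gamma_add_half, log_mul (by positivity) (by positivity),
    log_mul h2s.ne' (by positivity), log_rpow two_pos, log_sqrt pi_pos.le, add_assoc]

theorem continuousOn_log_Gamma : ContinuousOn (fun t => log (Gamma t)) (Ioi 0) :=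
  differentiableOn_Gamma_Ioi.continuousOn.log fun _ ht => (Gamma_pos_of_pos ht).ne'

/-- Near `0`, `log Γ t = log Γ (t + 1) - log t` is a continuous function plus an integrable one. -/
theorem intervalIntegrable_log_Gamma {a b : ℝ} (ha : 0 ≤ a) (hb : 0 ≤ b) :
    IntervalIntegrable (fun t => log (Gamma t)) volume a b := by
  have hshift : ContinuousOn (fun t => log (Gamma (t + 1))) (uIcc a b) :=
    continuousOn_log_Gamma.comp (by fun_prop) fun t ht =>
      show 0 < t + 1 by linarith [le_inf ha hb, ht.1]
  refine (intervalIntegrable_congr fun t ht => ?_).mp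
    (hshift.intervalIntegrable.sub intervalIntegrable_log')
  simp [log_Gamma_add_one ((le_inf ha hb).trans_lt ht.1)]

/-- Raabe's integral. -/
theorem integral_log_Gamma_zero_one :
    ∫ t in (0 : ℝ)..1, log (Gamma t) = log (2 * π) / 2 := by
  set I := ∫ t in (0 : ℝ)..1, log (Gamma t)
  have hlow := intervalIntegrable_log_Gamma le_rfl (one_half_pos (α := ℝ)).le
  have hhigh : IntervalIntegrable (fun t => log (Gamma (t + 1 / 2))) volume 0 (1 / 2) := by
    convert (intervalIntegrable_log_Gamma one_half_pos.le zero_le_one).comp_add_right (1 / 2)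
      using 1 <;> norm_num
  have hdoubleInt : IntervalIntegrable (fun t => log (Gamma (2 * t))) volume 0 (1 / 2) := by
    convert (intervalIntegrable_log_Gamma le_rfl zero_le_one).comp_mul_left (c := 2) using 1
    norm_num
  have hlinInt : IntervalIntegrable (fun t : ℝ => (1 - 2 * t) * log 2 + log π / 2)
      volume 0 (1 / 2) := by
    apply Continuous.intervalIntegrable; fun_prop
  have hdouble : ∫ t in (0 : ℝ)..1 / 2, log (Gamma (2 * t)) = I / 2 := by
    rw [integral_comp_mul_left (fun t => log (Gamma t)) two_ne_zero]
    norm_num [I]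
    ring
  have hlin : ∫ t in (0 : ℝ)..1 / 2, ((1 - 2 * t) * log 2 + log π / 2) =
      (log 2 + log π) / 4 := by
    rw [integral_add (by apply Continuous.intervalIntegrable; fun_prop) intervalIntegrable_const,
      intervalIntegral.integral_mul_const,
      integral_sub intervalIntegrable_const (by apply Continuous.intervalIntegrable; fun_prop),
      intervalIntegral.integral_const_mul, integral_id]
    norm_num
    ring
  have hI : I = I / 2 + (log 2 + log π) / 4 :=
    calc I = ∫ t in (0 : ℝ)..1 / 2, (log (Gamma t) + log (Gamma (t + 1 / 2))) := by
          rw [integral_add hlow hhigh, integral_comp_add_right (fun t => log (Gamma t)),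
            zero_add, add_halves, integral_add_adjacent_intervals hlow
              (intervalIntegrable_log_Gamma one_half_pos.le zero_le_one)]
      _ = ∫ t in (0 : ℝ)..1 / 2, (log (Gamma (2 * t)) + ((1 - 2 * t) * log 2 + log π / 2)) :=
          integral_congr_ae (Filter.Eventually.of_forall fun t ht =>
            log_Gamma_add_log_Gamma_add_half (by simpa using ht.1))
      _ = I / 2 + (log 2 + log π) / 4 := by
          rw [integral_add hdoubleInt hlinInt, hdouble, hlin]
  rw [log_mul two_ne_zero pi_ne_zero]
  linarith

theorem integral_log_Gamma_self_add_one {x : ℝ} (hx : 0 ≤ x) :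
    ∫ t in x..x + 1, log (Gamma t) = log (2 * π) / 2 + x * log x - x := by
  have hint {a b : ℝ} := @intervalIntegrable_log_Gamma a b
  have hone : ∫ t in (1 : ℝ)..x + 1, log (Gamma t) = ∫ t in (0 : ℝ)..x, log (Gamma (t + 1)) := by
    rw [integral_comp_add_right (fun t => log (Gamma t)), zero_add]
  have hshift : ∫ t in (0 : ℝ)..x, log (Gamma (t + 1)) =
      (∫ t in (0 : ℝ)..x, log t) + ∫ t in (0 : ℝ)..x, log (Gamma t) := by
    rw [← integral_add intervalIntegrable_log' (hint le_rfl hx)]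
    exact integral_congr_ae (Filter.Eventually.of_forall fun t ht =>
      log_Gamma_add_one ((le_inf le_rfl hx).trans_lt ht.1))
  rw [← integral_interval_sub_left (hint le_rfl (by linarith)) (hint le_rfl hx),
    ← integral_add_adjacent_intervals (hint le_rfl zero_le_one) (hint zero_le_one (by linarith)),
    hone, hshift, integral_log_Gamma_zero_one, integral_log]
  simp
  ring

theorem rpow_self_eq_exp_mul_log {x : ℝ} (hx : 0 ≤ x) : x ^ x = exp (x * log x) := by
  rcases hx.eq_or_lt with rfl | hx
  · simp
  · rw [rpow_def_of_pos hx, mul_comm]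

end Real

theorem kinkelinG_zero : kinkelinG 0 = 1 := by
  simp [kinkelinG]

theorem kinkelinG_add_one {x : ℝ} (hx : 0 ≤ x) : kinkelinG (x + 1) = x ^ x * kinkelinG x := by
  rw [kinkelinG, ← integral_add_adjacent_intervals (intervalIntegrable_log_Gamma le_rfl hx)
    (intervalIntegrable_log_Gamma hx (by linarith)), integral_log_Gamma_self_add_one hx,
    kinkelinG, rpow_self_eq_exp_mul_log hx, ← exp_add]
  congr 1
  ring

theorem kinkelinG_natCast (n : ℕ) : kinkelinG n = ∏ k ∈ range n, (k : ℝ) ^ k := by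
  induction n with
  | zero => simp [kinkelinG_zero]
  | succ n ih =>
    rw [Nat.cast_succ, kinkelinG_add_one n.cast_nonneg, ih, prod_range_succ, rpow_natCast,
      mul_comm]

theorem kinkelinG_nat_general (n : ℕ) :
    kinkelinG (n + 1) = ∏ k ∈ Finset.Icc 1 n, (k : ℝ) ^ k := by
  rw [← Nat.cast_succ, kinkelinG_natCast, prod_range_eq_mul_Ico _ n.add_one_pos,
    Finset.Ico_add_one_right_eq_Icc]
  simp

/-- For every positive integer `n`, `G̃(n+1) = 1^1 · 2^2 ⋯ n^n`. -/
theorem kinkelinG_nat (n : ℕ) (hn : 0 < n) :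
    kinkelinG (n + 1) = ∏ k ∈ Finset.Icc 1 n, (k : ℝ) ^ k :=
  kinkelinG_nat_general n
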